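/- Let R be a commutative local ring, e ≥ 2 an integer, A := R[X]/(X^e), π the image of X, E a finite free A-module of rank h₁, and let 0 = F^{[0]} ⊆ F^{[1]} ⊆ ⋯ ⊆ F^{[e]} be a Pappas–Rapoport filtration of rank d₁ on E, with 0 < d₁ < h₁. For 1 ≤ j ≤ e define F^{[e+j]} := {x ∈ E : π^j·x ∈ F^{[e−j]}}. Then: (i) F^{[e]} ⊆ F^{[e+1]} ⊆ ⋯ ⊆ F^{[2e−1]} ⊆ F^{[2e]} = E; (ii) each F^{[e+j]} is a direct summand of E as an R-module and is finite free over R of rank j·h₁ + (e−j)·d₁; (iii) π·F^{[e+j]} ⊆ F^{[e+j−1]} for all 1 ≤ j ≤ e; (iv) each quotient F^{[e+j]}/F^{[e+j−1]} is a finite free R-module of rank h₁ − d₁ (where F^{[e+0]} := F^{[e]}). (In other words, the Pappas–Rapoport filtration on the module of invariant differentials of a p-divisible group G canonically induces a Pappas–Rapoport filtration, with d₁ replaced by h₁ − d₁, for the dual p-divisible group G^D.) -/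

import Mathlib

/-- The ring `A = R[X]/(X^e)`. -/
abbrev TruncPoly (R : Type*) [CommRing R] (e : ℕ) : Type _ :=
  Polynomial R ⧸ Ideal.span {(Polynomial.X : Polynomial R) ^ e}

/-- The image `π` of `X` in `A = R[X]/(X^e)`. -/
noncomputable def piX (R : Type*) [CommRing R] (e : ℕ) : TruncPoly R e :=
  Ideal.Quotient.mk _ Polynomial.X

/-- Multiplication by `π^k`, as an `R`-linear endomorphism of a module over `R[X]/(X^e)`. -/
noncomputable def mulPi (R : Type*) [CommRing R] (e : ℕ)
    (E : Type*) [AddCommGroup E] [Module (TruncPoly R e) E] [Module R E]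
    [IsScalarTower R (TruncPoly R e) E] (k : ℕ) : E →ₗ[R] E :=
  (LinearMap.lsmul (TruncPoly R e) E (piX R e ^ k)).restrictScalars R

/-- A Pappas–Rapoport filtration of rank `d₁` on a module `E` over `A = R[X]/(X^e)`:
a chain of `R`-submodules `0 = F^{[0]} ⊆ F^{[1]} ⊆ ⋯ ⊆ F^{[e]}` of `E` such that each
`F^{[j]}` is an `R`-module direct summand of `E`, each quotient `F^{[j]}/F^{[j-1]}` is a
finite free `R`-module of rank `d₁`, and `π·F^{[j]} ⊆ F^{[j-1]}` for `1 ≤ j ≤ e`. -/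
def IsPRFiltration (R : Type*) [CommRing R] (e : ℕ)
    (E : Type*) [AddCommGroup E] [Module (TruncPoly R e) E] [Module R E]
    [IsScalarTower R (TruncPoly R e) E] (d₁ : ℕ) (F : ℕ → Submodule R E) : Prop :=
  F 0 = ⊥ ∧
  (∀ j < e, F j ≤ F (j + 1)) ∧
  (∀ j ≤ e, ∃ q : Submodule R E, IsCompl (F j) q) ∧
  (∀ j < e,
    Module.Finite R (↥(F (j + 1)) ⧸ (F j).comap (F (j + 1)).subtype) ∧
    Module.Free R (↥(F (j + 1)) ⧸ (F j).comap (F (j + 1)).subtype) ∧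
    Module.finrank R (↥(F (j + 1)) ⧸ (F j).comap (F (j + 1)).subtype) = d₁) ∧
  (∀ j < e, ∀ x ∈ F (j + 1), piX R e • x ∈ F j)

/-- The member `F^{[e+j]} := {x ∈ E : π^j·x ∈ F^{[e-j]}}` of the extended
(dual) Pappas–Rapoport filtration. -/
noncomputable def PRext (R : Type*) [CommRing R] (e : ℕ)
    (E : Type*) [AddCommGroup E] [Module (TruncPoly R e) E] [Module R E]
    [IsScalarTower R (TruncPoly R e) E] (F : ℕ → Submodule R E) (j : ℕ) : Submodule R E :=
  (F (e - j)).comap (mulPi R e E j)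

/-- The submodule `F'^{[j]} := {x ∈ E : π·x ∈ F^{[j]}}`. -/
noncomputable def PRdiv (R : Type*) [CommRing R] (e : ℕ)
    (E : Type*) [AddCommGroup E] [Module (TruncPoly R e) E] [Module R E]
    [IsScalarTower R (TruncPoly R e) E] (F : ℕ → Submodule R E) (j : ℕ) : Submodule R E :=
  (F j).comap (mulPi R e E 1)

/-!
If `v` is a basis of `E` over `A = R[X]/(X^e)`, the vectors `π^i • v_s` (`i < e`) form an
`R`-basis of `E` on which `π` acts as a shift; so `π^j E` is an `R`-direct summand of `E` of rank
`(e - j)·h₁`, and `π^j E = E[π^(e-j)]` because `X^e ∣ X^j p` forces `X^(e-j) ∣ p`.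

Thus `F^[e-j] ⊆ E[π^(e-j)] = π^j E`, and `F^[e+j]` is the kernel of the surjection
`E → π^j E / F^[e-j]`. Its target is a quotient of nested direct summands, hence finite
projective, hence free over the local ring `R`; so the surjection splits, and `F^[e+j]` is a
direct summand of rank `e·h₁ - (e-j)·(h₁ - d₁)`. The same fact about nested summands makes the
quotients `F^[e+j] / F^[e+j-1]` free, of rank `h₁ - d₁`.
-/

open Module Submodule LinearMap

section Summands

variable {R M N : Type*} [CommRing R] [AddCommGroup M] [Module R M] [AddCommGroup N] [Module R N]

theorem LinearMap.isComplemented_ker_of_surjective [Module.Projective R N] {g : M →ₗ[R] N}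
    (hg : Function.Surjective g) : IsComplemented (ker g) := by
  obtain ⟨s, hs⟩ := Module.projective_lifting_property g LinearMap.id hg
  have hidem : IsIdempotentElem (s ∘ₗ g) := by
    change (s ∘ₗ g) ∘ₗ (s ∘ₗ g) = s ∘ₗ g
    rw [comp_assoc, ← comp_assoc g, hs, id_comp]
  have hs_inj : Function.Injective s :=
    Function.LeftInverse.injective (g := g) (LinearMap.congr_fun hs)
  rw [← ker_comp_of_ker_eq_bot g (ker_eq_bot.mpr hs_inj)]
  exact ⟨_, hidem.isCompl.symm⟩

variable [IsLocalRing R] [Module.Finite R M] [Module.Free R M]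

theorem Submodule.finite_free_of_isComplemented {p : Submodule R M} (hp : IsComplemented p) :
    Module.Finite R p ∧ Module.Free R p := by
  obtain ⟨q, hpq⟩ := hp
  have : Module.Finite R p := .of_surjective _ (projectionOnto_surjective hpq)
  have : Module.Projective R p :=
    .of_split p.subtype (p.projectionOnto q hpq) (projectionOnto_comp_subtype hpq)
  exact ⟨inferInstance, Module.free_of_flat_of_isLocalRing⟩

theorem Submodule.finite_free_quotient_of_isComplemented {p : Submodule R M}
    (hp : IsComplemented p) :
    Module.Finite R (M ⧸ p) ∧ Module.Free R (M ⧸ p) ∧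
      finrank R p + finrank R (M ⧸ p) = finrank R M := by
  obtain ⟨q, hpq⟩ := hp
  obtain ⟨_, _⟩ := finite_free_of_isComplemented ⟨q, hpq⟩
  obtain ⟨_, _⟩ := finite_free_of_isComplemented ⟨p, hpq.symm⟩
  let φ := quotientEquivOfIsCompl p q hpq
  refine ⟨.equiv φ.symm, .of_equiv φ.symm, ?_⟩
  rw [φ.finrank_eq, ← Module.finrank_prod, (prodEquivOfIsCompl p q hpq).finrank_eq]

theorem Submodule.finite_free_subquotient {p m : Submodule R M} (hp : IsComplemented p)
    (hm : IsComplemented m) (hpm : p ≤ m) :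
    Module.Finite R (m ⧸ p.comap m.subtype) ∧ Module.Free R (m ⧸ p.comap m.subtype) ∧
      finrank R p + finrank R (m ⧸ p.comap m.subtype) = finrank R m := by
  obtain ⟨q, hpq⟩ := hp
  obtain ⟨_, _⟩ := finite_free_of_isComplemented hm
  rw [← (comapSubtypeEquivOfLe hpm).finrank_eq]
  exact finite_free_quotient_of_isComplemented
    ⟨_, isCompl_comap_subtype_of_isCompl_of_le hpq hpm⟩

variable [Module.Finite R N] [Module.Free R N]

theorem Submodule.isComplemented_comap_of_le_range {f : M →ₗ[R] N} {p : Submodule R N}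
    (hp : IsComplemented p) (hf : IsComplemented (range f)) (hpf : p ≤ range f) :
    IsComplemented (p.comap f) ∧
      finrank R (p.comap f) + finrank R (range f) = finrank R M + finrank R p := by
  obtain ⟨_, _, hrank_range⟩ := finite_free_subquotient hp hf hpf
  let g : M →ₗ[R] range f ⧸ p.comap (range f).subtype := mkQ _ ∘ₗ f.rangeRestrict
  have hg : Function.Surjective g := (mkQ_surjective _).comp f.surjective_rangeRestrict
  have hker : ker g = p.comap f := by ext x; simp [g]
  have hcompl : IsComplemented (p.comap f) := hker ▸ isComplemented_ker_of_surjective hg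
  obtain ⟨-, -, hrank⟩ := finite_free_quotient_of_isComplemented hcompl
  rw [← hker, (g.quotKerEquivOfSurjective hg).finrank_eq, hker] at hrank
  exact ⟨hcompl, by omega⟩

end Summands

section TruncPoly

variable {R : Type*} [CommRing R] {e : ℕ}

theorem piX_pow_eq_zero {n : ℕ} (hn : e ≤ n) : piX R e ^ n = 0 := by
  rw [piX, ← map_pow, Ideal.Quotient.eq_zero_iff_mem, Ideal.mem_span_singleton]
  exact pow_dvd_pow _ hn

theorem exists_eq_piX_pow_mul_of_piX_pow_mul_eq_zero {k : ℕ} {a : TruncPoly R e}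
    (ha : piX R e ^ k * a = 0) : ∃ b, a = piX R e ^ (e - k) * b := by
  obtain ⟨p, rfl⟩ := Ideal.Quotient.mk_surjective a
  rw [piX, ← map_pow, ← map_mul, Ideal.Quotient.eq_zero_iff_mem, Ideal.mem_span_singleton,
    Polynomial.X_pow_dvd_iff] at ha
  obtain ⟨q, rfl⟩ : Polynomial.X ^ (e - k) ∣ p := by
    refine Polynomial.X_pow_dvd_iff.mpr fun d hd ↦ ?_
    simpa only [Polynomial.coeff_X_pow_mul] using ha (d + k) (by omega)
  exact ⟨Ideal.Quotient.mk _ q, by rw [map_mul, map_pow]; rfl⟩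

variable (R e) in
noncomputable def truncPolyBasis [Nontrivial R] : Basis (Fin e) R (TruncPoly R e) :=
  (AdjoinRoot.powerBasis' (Polynomial.monic_X_pow e)).basis.reindex
    (finCongr (by simp [AdjoinRoot.powerBasis'_dim]))

theorem truncPolyBasis_apply [Nontrivial R] (i : Fin e) :
    truncPolyBasis R e i = piX R e ^ (i : ℕ) :=
  let pb := AdjoinRoot.powerBasis' (Polynomial.monic_X_pow (R := R) e)
  (pb.basis.reindex_apply _ i).trans ((pb.basis_eq_pow _).trans rfl)

end TruncPoly

section TruncPolyModule

variable {R : Type*} [CommRing R] {e : ℕ} {E : Type*} [AddCommGroup E]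
  [Module (TruncPoly R e) E] [Module R E] [IsScalarTower R (TruncPoly R e) E]

theorem mulPi_apply (k : ℕ) (x : E) : mulPi R e E k x = piX R e ^ k • x := rfl

theorem ker_mulPi_eq_range [Module.Finite (TruncPoly R e) E] [Module.Free (TruncPoly R e) E]
    {k : ℕ} (hk : k ≤ e) : ker (mulPi R e E k) = range (mulPi R e E (e - k)) := by
  refine le_antisymm (fun x hx ↦ ?_) ?_
  · let b := Free.chooseBasis (TruncPoly R e) E
    have hcoord (s) : piX R e ^ k * b.equivFun x s = 0 := by
      simpa [mulPi_apply] using congr_arg (b.repr · s) (mem_ker.mp hx)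
    choose c hc using fun s ↦ exists_eq_piX_pow_mul_of_piX_pow_mul_eq_zero (hcoord s)
    refine ⟨b.equivFun.symm c, b.equivFun.injective ?_⟩
    ext s
    rw [mulPi_apply, map_smul, LinearEquiv.apply_symm_apply, Pi.smul_apply, smul_eq_mul, hc s]
  · rintro _ ⟨y, rfl⟩
    rw [mem_ker, mulPi_apply, mulPi_apply, smul_smul, ← pow_add, piX_pow_eq_zero (by omega)]
    exact zero_smul (TruncPoly R e) (_ : E)

theorem truncPoly_nontrivial [Nontrivial R] (he : 0 < e) : Nontrivial (TruncPoly R e) :=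
  nontrivial_of_ne _ _
    (by simpa [truncPolyBasis_apply] using (truncPolyBasis R e).ne_zero ⟨0, he⟩)

variable [Nontrivial R] [Module.Free (TruncPoly R e) E]

variable (R e E) in
noncomputable def towerBasis : Basis (Fin e × Free.ChooseBasisIndex (TruncPoly R e) E) R E :=
  (truncPolyBasis R e).smulTower (Free.chooseBasis (TruncPoly R e) E)

theorem mulPi_towerBasis (j : ℕ) (p : Fin e × Free.ChooseBasisIndex (TruncPoly R e) E) :
    mulPi R e E j (towerBasis R e E p) =
      if h : (p.1 : ℕ) + j < e then towerBasis R e E (⟨p.1 + j, h⟩, p.2) else 0 := by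
  simp only [towerBasis, Basis.smulTower_apply, truncPolyBasis_apply, mulPi_apply, smul_smul,
    ← pow_add]
  split_ifs with h
  · rw [add_comm]
  · rw [piX_pow_eq_zero (by omega)]
    exact zero_smul (TruncPoly R e) (_ : E)

theorem range_mulPi_eq_span (j : ℕ) :
    range (mulPi R e E j) = span R (towerBasis R e E '' {p | j ≤ (p.1 : ℕ)}) := by
  rw [range_eq_map, ← (towerBasis R e E).span_eq, Submodule.map_span, ← Set.range_comp]
  apply le_antisymm <;> rw [span_le]
  · rintro _ ⟨p, rfl⟩
    rw [Function.comp_apply, mulPi_towerBasis]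
    split_ifs
    · exact subset_span ⟨_, by simp, rfl⟩
    · exact zero_mem _
  · rintro _ ⟨p, hp : j ≤ (p.1 : ℕ), rfl⟩
    refine subset_span ⟨(⟨p.1 - j, by omega⟩, p.2), ?_⟩
    rw [Function.comp_apply, mulPi_towerBasis, dif_pos (show (p.1 : ℕ) - j + j < e by omega)]
    congr
    exact Nat.sub_add_cancel hp

theorem isComplemented_range_mulPi (j : ℕ) : IsComplemented (range (mulPi R e E j)) := by
  let b := towerBasis R e E
  rw [range_mulPi_eq_span]
  exact ⟨_, b.linearIndependent.isCompl_span_image b.span_eq isCompl_compl⟩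

theorem finrank_range_mulPi [Module.Finite (TruncPoly R e) E] (he : 0 < e) (j : ℕ) :
    finrank R (range (mulPi R e E j)) = (e - j) * finrank (TruncPoly R e) E := by
  have : Nontrivial (TruncPoly R e) := truncPoly_nontrivial he
  have hcard : Fintype.card {i : Fin e // j ≤ (i : ℕ)} = e - j := by
    simp_rw [← not_lt]
    rw [Fintype.card_subtype_compl, Fintype.card_subtype, Fin.card_filter_val_lt, Fintype.card_fin]
    omega
  let s : Set (Fin e × Free.ChooseBasisIndex (TruncPoly R e) E) := {p | j ≤ (p.1 : ℕ)}
  have hspan := finrank_span_eq_card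
    ((towerBasis R e E).linearIndependent.comp ((↑) : s → _) Subtype.val_injective)
  rw [Function.comp_def] at hspan
  rw [range_mulPi_eq_span, Set.image_eq_range, hspan, finrank_eq_card_chooseBasisIndex, ← hcard,
    ← Fintype.card_prod]
  exact Fintype.card_congr (Equiv.prodSubtypeFstEquivSubtypeProd (p := fun i : Fin e ↦ j ≤ i))

theorem finrank_eq_mul_finrank [Module.Finite (TruncPoly R e) E] (he : 0 < e) :
    finrank R E = e * finrank (TruncPoly R e) E := by
  have : Nontrivial (TruncPoly R e) := truncPoly_nontrivial he
  rw [finrank_eq_card_basis (towerBasis R e E), Fintype.card_prod, Fintype.card_fin,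
    finrank_eq_card_chooseBasisIndex]

theorem finite_free_of_truncPoly [Module.Finite (TruncPoly R e) E] :
    Module.Finite R E ∧ Module.Free R E :=
  ⟨.of_basis (towerBasis R e E), .of_basis (towerBasis R e E)⟩

end TruncPolyModule

theorem prext_zero {R : Type*} [CommRing R] {e : ℕ} {E : Type*} [AddCommGroup E]
    [Module (TruncPoly R e) E] [Module R E] [IsScalarTower R (TruncPoly R e) E]
    (F : ℕ → Submodule R E) : PRext R e E F 0 = F e := by
  ext x
  simp [PRext, mulPi_apply]

namespace IsPRFiltration

variable {R : Type*} [CommRing R] {e : ℕ} {E : Type*} [AddCommGroup E]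
  [Module (TruncPoly R e) E] [Module R E] [IsScalarTower R (TruncPoly R e) E]
  {d₁ : ℕ} {F : ℕ → Submodule R E}

theorem bot (hF : IsPRFiltration R e E d₁ F) : F 0 = ⊥ := hF.1

theorem le_succ (hF : IsPRFiltration R e E d₁ F) {j : ℕ} (hj : j < e) : F j ≤ F (j + 1) :=
  hF.2.1 j hj

theorem isComplemented (hF : IsPRFiltration R e E d₁ F) {j : ℕ} (hj : j ≤ e) :
    IsComplemented (F j) :=
  hF.2.2.1 j hj

theorem finrank_quotient (hF : IsPRFiltration R e E d₁ F) {j : ℕ} (hj : j < e) :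
    finrank R (F (j + 1) ⧸ (F j).comap (F (j + 1)).subtype) = d₁ :=
  (hF.2.2.2.1 j hj).2.2

theorem piX_smul_mem (hF : IsPRFiltration R e E d₁ F) {j : ℕ} (hj : j < e) {x : E}
    (hx : x ∈ F (j + 1)) : piX R e • x ∈ F j :=
  hF.2.2.2.2 j hj x hx

theorem le_ker_mulPi (hF : IsPRFiltration R e E d₁ F) {k : ℕ} (hk : k ≤ e) :
    F k ≤ ker (mulPi R e E k) := by
  induction k with
  | zero => simp [hF.bot]
  | succ k ih =>
    intro x hx
    have hπx := ih (by omega) (hF.piX_smul_mem (by omega) hx)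
    rw [mem_ker, mulPi_apply] at hπx ⊢
    rwa [pow_succ, mul_smul]

theorem finrank_eq [IsLocalRing R] [Module.Finite R E] [Module.Free R E]
    (hF : IsPRFiltration R e E d₁ F) {k : ℕ} (hk : k ≤ e) : finrank R (F k) = k * d₁ := by
  induction k with
  | zero => rw [hF.bot, finrank_bot, zero_mul]
  | succ k ih =>
    obtain ⟨-, -, hrank⟩ := finite_free_subquotient (hF.isComplemented (by omega))
      (hF.isComplemented hk) (hF.le_succ (by omega))
    rw [← hrank, ih (by omega), hF.finrank_quotient (by omega), add_one_mul]

theorem le_range_mulPi [Module.Finite (TruncPoly R e) E] [Module.Free (TruncPoly R e) E]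
    (hF : IsPRFiltration R e E d₁ F) {j : ℕ} (hj : j ≤ e) :
    F (e - j) ≤ range (mulPi R e E j) := by
  have hker := ker_mulPi_eq_range (R := R) (E := E) (Nat.sub_le e j)
  rw [Nat.sub_sub_self hj] at hker
  exact hker ▸ hF.le_ker_mulPi (Nat.sub_le e j)

theorem prext_mono (hF : IsPRFiltration R e E d₁ F) {j : ℕ} (hj : j < e) :
    PRext R e E F j ≤ PRext R e E F (j + 1) := by
  intro x hx
  simp only [PRext, mem_comap, mulPi_apply] at hx ⊢
  rw [pow_succ', mul_smul]
  exact hF.piX_smul_mem (by omega) (by rwa [show e - (j + 1) + 1 = e - j by omega])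

theorem prext_self (hF : IsPRFiltration R e E d₁ F) : PRext R e E F e = ⊤ := by
  refine eq_top_iff.mpr fun x _ ↦ ?_
  simp only [PRext, mem_comap, mulPi_apply, piX_pow_eq_zero le_rfl, Nat.sub_self, hF.bot]
  exact (mem_bot R).mpr (zero_smul (TruncPoly R e) x)

theorem piX_smul_mem_prext (hF : IsPRFiltration R e E d₁ F) {j : ℕ} (hj₀ : 1 ≤ j)
    (hj : j ≤ e) {x : E} (hx : x ∈ PRext R e E F j) : piX R e • x ∈ PRext R e E F (j - 1) := by
  simp only [PRext, mem_comap, mulPi_apply] at hx ⊢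
  rw [smul_smul, ← pow_succ, Nat.sub_add_cancel hj₀, show e - (j - 1) = e - j + 1 by omega]
  exact hF.le_succ (by omega) hx

section LocalRing

variable [IsLocalRing R] [Module.Finite (TruncPoly R e) E] [Module.Free (TruncPoly R e) E]

theorem isComplemented_prext (hF : IsPRFiltration R e E d₁ F) {j : ℕ} (hj : j ≤ e) :
    IsComplemented (PRext R e E F j) :=
  have ⟨_, _⟩ := finite_free_of_truncPoly (R := R) (e := e) (E := E)
  (isComplemented_comap_of_le_range (hF.isComplemented (Nat.sub_le e j))
    (isComplemented_range_mulPi j) (hF.le_range_mulPi hj)).1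

theorem finrank_prext (hF : IsPRFiltration R e E d₁ F) (he : 0 < e) {j : ℕ} (hj : j ≤ e) :
    finrank R (PRext R e E F j) = j * finrank (TruncPoly R e) E + (e - j) * d₁ := by
  obtain ⟨_, _⟩ := finite_free_of_truncPoly (R := R) (e := e) (E := E)
  have hrank := (isComplemented_comap_of_le_range (hF.isComplemented (Nat.sub_le e j))
    (isComplemented_range_mulPi j) (hF.le_range_mulPi hj)).2
  rw [finrank_range_mulPi he, finrank_eq_mul_finrank (R := R) (E := E) he,
    hF.finrank_eq (Nat.sub_le e j)] at hrank
  have hsplit : e * finrank (TruncPoly R e) E =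
      j * finrank (TruncPoly R e) E + (e - j) * finrank (TruncPoly R e) E := by
    rw [← add_mul, Nat.add_sub_cancel' hj]
  rw [PRext]
  linarith

theorem finite_free_prext_succ_quotient (hF : IsPRFiltration R e E d₁ F) (he : 0 < e) {j : ℕ}
    (hj : j < e) :
    let Q := PRext R e E F (j + 1) ⧸ (PRext R e E F j).comap (PRext R e E F (j + 1)).subtype
    Module.Finite R Q ∧ Module.Free R Q ∧ finrank R Q = finrank (TruncPoly R e) E - d₁ := by
  intro Q
  obtain ⟨_, _⟩ := finite_free_of_truncPoly (R := R) (e := e) (E := E)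
  obtain ⟨hfin, hfree, hrank⟩ := finite_free_subquotient (hF.isComplemented_prext hj.le)
    (hF.isComplemented_prext hj) (hF.prext_mono hj)
  refine ⟨hfin, hfree, ?_⟩
  rw [hF.finrank_prext he hj.le, hF.finrank_prext he hj, show e - j = e - (j + 1) + 1 by omega]
    at hrank
  generalize finrank R Q = q at hrank ⊢
  have : q + d₁ = finrank (TruncPoly R e) E := by linarith
  omega

end LocalRing

end IsPRFiltration

open IsPRFiltration in
theorem pappas_rapoport_dual_filtration
    (R : Type*) [CommRing R] [IsLocalRing R] (e : ℕ) (he : 2 ≤ e) (h₁ d₁ : ℕ)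
    (E : Type*) [AddCommGroup E] [Module (TruncPoly R e) E] [Module R E]
    [IsScalarTower R (TruncPoly R e) E]
    [Module.Finite (TruncPoly R e) E] [Module.Free (TruncPoly R e) E]
    (hrank : Module.finrank (TruncPoly R e) E = h₁)
    (F : ℕ → Submodule R E) (hF : IsPRFiltration R e E d₁ F) :
    (PRext R e E F 0 = F e) ∧
    (∀ j < e, PRext R e E F j ≤ PRext R e E F (j + 1)) ∧
    (PRext R e E F e = ⊤) ∧
    (∀ j, 1 ≤ j → j ≤ e →
      (∃ q : Submodule R E, IsCompl (PRext R e E F j) q) ∧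
      Module.Finite R (PRext R e E F j) ∧ Module.Free R (PRext R e E F j) ∧
      Module.finrank R (PRext R e E F j) = j * h₁ + (e - j) * d₁) ∧
    (∀ j, 1 ≤ j → j ≤ e → ∀ x ∈ PRext R e E F j, piX R e • x ∈ PRext R e E F (j - 1)) ∧
    (∀ j, 1 ≤ j → j ≤ e →
      Module.Finite R (↥(PRext R e E F j) ⧸
        (PRext R e E F (j - 1)).comap (PRext R e E F j).subtype) ∧
      Module.Free R (↥(PRext R e E F j) ⧸
        (PRext R e E F (j - 1)).comap (PRext R e E F j).subtype) ∧
      Module.finrank R (↥(PRext R e E F j) ⧸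
        (PRext R e E F (j - 1)).comap (PRext R e E F j).subtype) = h₁ - d₁) := by
  have he₀ : 0 < e := by omega
  obtain ⟨_, _⟩ := finite_free_of_truncPoly (R := R) (e := e) (E := E)
  subst hrank
  refine ⟨prext_zero F, fun j ↦ hF.prext_mono, hF.prext_self, fun j _ hj ↦ ?_,
    fun j hj₀ hj x ↦ hF.piX_smul_mem_prext hj₀ hj, fun j hj₀ hj ↦ ?_⟩
  · obtain ⟨hfin, hfree⟩ := finite_free_of_isComplemented (hF.isComplemented_prext hj)
    exact ⟨hF.isComplemented_prext hj, hfin, hfree, hF.finrank_prext he₀ hj⟩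
  · obtain ⟨j, rfl⟩ := Nat.exists_eq_add_of_le' hj₀
    rw [Nat.add_sub_cancel]
    exact hF.finite_free_prext_succ_quotient he₀ hj
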